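/- arXiv:1402.0763 — 3 statements merged into one kernel-verified Lean document; each statement's English description precedes it below -/
import Mathlib

section
/- Let A and B be self-adjoint operators with spectral projections P = 1_{A<0} and Q = 1_{B<0}. If the operators (1-P) B_- (1-P) and P B_+ P are trace class, then (Q-P)|B|^{1/2} is Hilbert--Schmidt and ‖(Q-P)|B|^{1/2}‖_{S_2}^2 = tr((1-P) B_- (1-P)) + tr(P B_+ P). -/
/-!
Since `Q - P = (1 - P) Q - P (1 - Q)`, the operator `(Q - P) S` is `X - Y` with
`X = (1 - P) Q S` and `Y = P (1 - Q) S`, whose ranges lie in the orthogonal subspaces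
`ran (1 - P)` and `ran P`; hence `‖(Q - P) S‖₂² = ‖X‖₂² + ‖Y‖₂²`. The projection `Q`
compresses `|B| = S²` to `B₋` and `1 - Q` compresses it to `B₊`, so `X X* = (1 - P) B₋ (1 - P)`
and `Y Y* = P B₊ P`. Finally `‖X‖₂² = ‖X*‖₂² = tr (X X*)`, by Parseval and exchanging the
order of summation in `∑ᵢ ∑ⱼ |⟪eⱼ, X eᵢ⟫|²`.
-/

open scoped InnerProductSpace InnerProduct NNReal

namespace HilbertBasis

variable {ι 𝕜 E : Type*} [RCLike 𝕜] [NormedAddCommGroup E] [InnerProductSpace 𝕜 E]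

theorem hasSum_norm_inner_sq (b : HilbertBasis ι 𝕜 E) (x : E) :
    HasSum (fun i => ‖⟪b i, x⟫_𝕜‖ ^ 2) (‖x‖ ^ 2) := by
  have h := lp.hasSum_norm (p := 2) (by norm_num) (b.repr x)
  simp only [ENNReal.toReal_ofNat, Real.rpow_two, LinearIsometryEquiv.norm_map] at h
  simpa only [b.repr_apply_apply] using h

theorem tsum_enorm_inner_sq (b : HilbertBasis ι 𝕜 E) (x : E) :
    ∑' i, ‖⟪b i, x⟫_𝕜‖ₑ ^ 2 = ‖x‖ₑ ^ 2 := by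
  have h := b.hasSum_norm_inner_sq x
  simp only [← ofReal_norm, ← ENNReal.ofReal_pow (norm_nonneg _)]
  rw [← ENNReal.ofReal_tsum_of_nonneg (fun _ => by positivity) h.summable, h.tsum_eq]

end HilbertBasis

namespace ContinuousLinearMap

variable {ι κ 𝕜 E F : Type*} [RCLike 𝕜] [NormedAddCommGroup E] [InnerProductSpace 𝕜 E]
  [CompleteSpace E] [NormedAddCommGroup F] [InnerProductSpace 𝕜 F] [CompleteSpace F]

theorem tsum_enorm_apply_sq_eq_tsum_enorm_adjoint_apply_sq (b : HilbertBasis ι 𝕜 E)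
    (c : HilbertBasis κ 𝕜 F) (T : E →L[𝕜] F) :
    ∑' i, ‖T (b i)‖ₑ ^ 2 = ∑' j, ‖(T†) (c j)‖ₑ ^ 2 := by
  simp only [← c.tsum_enorm_inner_sq (T (b _)), ← b.tsum_enorm_inner_sq ((T†) (c _))]
  rw [ENNReal.tsum_comm]
  refine tsum_congr fun j => tsum_congr fun i => ?_
  rw [adjoint_inner_right, ← inner_conj_symm, RCLike.enorm_conj]

theorem hasSum_norm_apply_sq_of_hasSum_norm_adjoint_apply_sq (b : HilbertBasis ι 𝕜 E)
    (c : HilbertBasis κ 𝕜 F) (T : E →L[𝕜] F) {s : ℝ}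
    (h : HasSum (fun j => ‖(T†) (c j)‖ ^ 2) s) : HasSum (fun i => ‖T (b i)‖ ^ 2) s := by
  lift s to ℝ≥0 using h.nonneg fun _ => by positivity
  simp only [← coe_nnnorm, ← NNReal.coe_pow, NNReal.hasSum_coe, ← ENNReal.hasSum_coe] at h ⊢
  rw [ENNReal.summable.hasSum_iff] at h ⊢
  have hswap := tsum_enorm_apply_sq_eq_tsum_enorm_adjoint_apply_sq b c T
  simp only [enorm] at hswap
  exact hswap.trans h

theorem re_inner_mul_adjoint_apply_self (T : E →L[𝕜] E) (x : E) :
    RCLike.re ⟪(T * T†) x, x⟫_𝕜 = ‖(T†) x‖ ^ 2 := by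
  rw [apply_norm_sq_eq_inner_adjoint_left, adjoint_adjoint]
  rfl

theorem hasSum_norm_apply_sq_of_summable_re_inner_mul_adjoint (b : HilbertBasis ι 𝕜 E)
    (T : E →L[𝕜] E) (h : Summable fun i => RCLike.re ⟪(T * T†) (b i), b i⟫_𝕜) :
    HasSum (fun i => ‖T (b i)‖ ^ 2) (∑' i, RCLike.re ⟪(T * T†) (b i), b i⟫_𝕜) := by
  simp only [re_inner_mul_adjoint_apply_self] at h ⊢
  exact hasSum_norm_apply_sq_of_hasSum_norm_adjoint_apply_sq b b T h.hasSum

end ContinuousLinearMap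

section StarProjection

variable {𝕜 E : Type*} [RCLike 𝕜] [NormedAddCommGroup E] [InnerProductSpace 𝕜 E]
  [CompleteSpace E]

open ContinuousLinearMap

theorem IsStarProjection.norm_one_sub_apply_sub_apply_sq {P : E →L[𝕜] E}
    (hP : IsStarProjection P) (u v : E) :
    ‖(1 - P) u - P v‖ ^ 2 = ‖(1 - P) u‖ ^ 2 + ‖P v‖ ^ 2 := by
  have horth : ⟪(1 - P) u, P v⟫_𝕜 = 0 := by
    rw [← adjoint_inner_left, ← star_eq_adjoint, hP.isSelfAdjoint.star_eq,
      show P ((1 - P) u) = (P * (1 - P)) u from rfl, hP.mul_one_sub_self, zero_apply,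
      inner_zero_left]
  rw [norm_sub_sq (𝕜 := 𝕜), horth, map_zero, mul_zero, sub_zero]

end StarProjection

section Compression

variable {R : Type*} [Ring R] {Q Bp Bm : R}

theorem mul_add_mul_eq_of_mul_eq_zero (hQBp : Q * Bp = 0) (hQBm : Q * Bm = Bm)
    (hBmQ : Bm * Q = Bm) : Q * (Bp + Bm) * Q = Bm := by
  rw [mul_add, hQBp, hQBm, zero_add, hBmQ]

theorem one_sub_mul_add_mul_one_sub_eq_of_mul_eq_zero (hQBp : Q * Bp = 0) (hQBm : Q * Bm = Bm)
    (hBpQ : Bp * Q = 0) : (1 - Q) * (Bp + Bm) * (1 - Q) = Bp := by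
  rw [sub_mul, one_mul, mul_add, hQBp, hQBm, zero_add, add_sub_cancel_right, mul_sub, mul_one,
    hBpQ, sub_zero]

end Compression

theorem stmt1_general {H : Type*} [NormedAddCommGroup H] [InnerProductSpace ℂ H] [CompleteSpace H]
    {ι : Type*} (e : HilbertBasis ι ℂ H)
    (P Q Bp Bm S : H →L[ℂ] H)
    (hBp : Bp.IsPositive) (hBm : Bm.IsPositive)
    (hP : IsSelfAdjoint P) (hP2 : P * P = P)
    (hQ : IsSelfAdjoint Q)
    (hQBp : Q * Bp = 0) (hQBm : Q * Bm = Bm)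
    (hS : S.IsPositive) (hS2 : S * S = Bp + Bm)
    (h1 : Summable fun i => (inner ℂ (((1 - P) * Bm * (1 - P)) (e i)) (e i) : ℂ).re)
    (h2 : Summable fun i => (inner ℂ ((P * Bp * P) (e i)) (e i) : ℂ).re) :
    Summable (fun i => ‖((Q - P) * S) (e i)‖ ^ 2) ∧
      ∑' i, ‖((Q - P) * S) (e i)‖ ^ 2 =
        (∑' i, (inner ℂ (((1 - P) * Bm * (1 - P)) (e i)) (e i) : ℂ).re) +
          ∑' i, (inner ℂ ((P * Bp * P) (e i)) (e i) : ℂ).re := by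
  have hP' : IsStarProjection P := ⟨hP2, hP⟩
  have hBmQ : Bm * Q = Bm := by
    simpa [hQ.star_eq, hBm.isSelfAdjoint.star_eq] using congrArg star hQBm
  have hBpQ : Bp * Q = 0 := by
    simpa [hQ.star_eq, hBp.isSelfAdjoint.star_eq] using congrArg star hQBp
  set X := (1 - P) * Q * S
  set Y := P * (1 - Q) * S
  have hXX : X * X† = (1 - P) * Bm * (1 - P) := by
    rw [← ContinuousLinearMap.star_eq_adjoint, ← mul_add_mul_eq_of_mul_eq_zero hQBp hQBm hBmQ,
      ← hS2]
    simp only [X, star_mul, star_sub, star_one, hS.isSelfAdjoint.star_eq, hQ.star_eq, hP.star_eq]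
    noncomm_ring
  have hYY : Y * Y† = P * Bp * P := by
    rw [← ContinuousLinearMap.star_eq_adjoint,
      ← one_sub_mul_add_mul_one_sub_eq_of_mul_eq_zero hQBp hQBm hBpQ, ← hS2]
    simp only [Y, star_mul, star_sub, star_one, hS.isSelfAdjoint.star_eq, hQ.star_eq, hP.star_eq]
    noncomm_ring
  have hX := hXX ▸ ContinuousLinearMap.hasSum_norm_apply_sq_of_summable_re_inner_mul_adjoint e X (hXX ▸ h1)
  have hY := hYY ▸ ContinuousLinearMap.hasSum_norm_apply_sq_of_summable_re_inner_mul_adjoint e Y (hYY ▸ h2)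
  have hdec : (Q - P) * S = X - Y := by
    simp only [X, Y]
    noncomm_ring
  have hsplit (v : H) : ‖((Q - P) * S) v‖ ^ 2 = ‖X v‖ ^ 2 + ‖Y v‖ ^ 2 := by
    rw [hdec]
    exact hP'.norm_one_sub_apply_sub_apply_sq (Q (S v)) ((1 - Q) (S v))
  have h := hX.add hY
  simp only [← hsplit] at h
  exact ⟨h.summable, h.tsum_eq⟩

/-- Let `B` be a (bounded) self-adjoint operator with positive/negative parts
`B = Bp - Bm`, `|B| = Bp + Bm = S²` (so `S = |B|^{1/2}`), let `Q = 1_{B<0}` be its negative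
spectral projection and `P` any orthogonal projection.  If `(1-P) B_- (1-P)` and `P B_+ P` are
trace class (diagonal summable in a Hilbert basis `e`), then `(Q-P)|B|^{1/2}` is
Hilbert--Schmidt and
`‖(Q-P)|B|^{1/2}‖_{S₂}² = tr((1-P) B_- (1-P)) + tr(P B_+ P)`. -/
theorem stmt1 {H : Type*} [NormedAddCommGroup H] [InnerProductSpace ℂ H] [CompleteSpace H]
    {ι : Type*} (e : HilbertBasis ι ℂ H)
    (B P Q Bp Bm S : H →L[ℂ] H)
    (hB : IsSelfAdjoint B)
    (hBp : Bp.IsPositive) (hBm : Bm.IsPositive)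
    (hBdec : B = Bp - Bm) (hBorth : Bp * Bm = 0)
    (hP : IsSelfAdjoint P) (hP2 : P * P = P)
    (hQ : IsSelfAdjoint Q) (hQ2 : Q * Q = Q)
    (hQBp : Q * Bp = 0) (hQBm : Q * Bm = Bm)
    (hS : S.IsPositive) (hS2 : S * S = Bp + Bm)
    (h1 : Summable fun i => (inner ℂ (((1 - P) * Bm * (1 - P)) (e i)) (e i) : ℂ).re)
    (h2 : Summable fun i => (inner ℂ ((P * Bp * P) (e i)) (e i) : ℂ).re) :
    Summable (fun i => ‖((Q - P) * S) (e i)‖ ^ 2) ∧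
      ∑' i, ‖((Q - P) * S) (e i)‖ ^ 2 =
        (∑' i, (inner ℂ (((1 - P) * Bm * (1 - P)) (e i)) (e i) : ℂ).re) +
          ∑' i, (inner ℂ ((P * Bp * P) (e i)) (e i) : ℂ).re :=
  stmt1_general e P Q Bp Bm S hBp hBm hP hP2 hQ hQBp hQBm hS hS2 h1 h2
end

section
/- Let A and B be self-adjoint operators, P = 1_{A<0}, Q = 1_{B<0}. Assume P(B-A)P is trace class. Then P(B_- - A_-)P and (1-P)(B_- - A_-)(1-P) are both trace class if and only if (Q-P)|B|^{1/2} is Hilbert--Schmidt, and in that case tr(P(B_- - A_-)P) + tr((1-P)(B_- - A_-)(1-P)) + tr(P(B-A)P) = ‖(Q-P)|B|^{1/2}‖_{S_2}^2. -/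
/-! With `X = (Q - P) |B|^{1/2}` one has `X X* = P B₊ P + (1 - P) B₋ (1 - P)`, because `Q` kills
`B₊` and fixes `B₋`. Compressing by `P` and by `1 - P`, and using `P A₊ = 0`, `P A₋ = A₋`, gives
`P (B₋ - A₋) P = (P X)(P X)* - P (B - A) P` and `(1 - P)(B₋ - A₋)(1 - P) = ((1 - P) X)((1 - P) X)*`.
So the three diagonals add up to the diagonal `‖X* eᵢ‖²` of `X X*`, and `∑ ‖X* eᵢ‖² = ∑ ‖X eᵢ‖²`
because both are the sum of the squared matrix entries of `X` (Parseval). -/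

/-- A (bounded) operator is trace class iff it is the difference of two positive operators
whose diagonals with respect to the Hilbert basis `e` are summable.  (For self-adjoint
operators this is equivalent to membership in the trace class `S₁`.) -/
def IsTraceClassDiag {H : Type*} [NormedAddCommGroup H] [InnerProductSpace ℂ H]
    [CompleteSpace H] {ι : Type*} (e : HilbertBasis ι ℂ H) (T : H →L[ℂ] H) : Prop :=
  ∃ T₁ T₂ : H →L[ℂ] H, T₁.IsPositive ∧ T₂.IsPositive ∧ T = T₁ - T₂ ∧
    (Summable fun i => (inner ℂ (T₁ (e i)) (e i) : ℂ).re) ∧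
    (Summable fun i => (inner ℂ (T₂ (e i)) (e i) : ℂ).re)

open scoped InnerProductSpace InnerProduct
open ContinuousLinearMap

theorem IsIdempotentElem.mul_add_mul_mul_eq {R : Type*} [Ring R] {p : R} (hp : IsIdempotentElem p)
    (a b : R) : p * (p * a * p + (1 - p) * b * (1 - p)) * p = p * a * p := by
  have h₁ : p * (1 - p) = 0 := hp.mul_one_sub_self
  have h₂ : (1 - p) * p = 0 := hp.one_sub_mul_self
  calc p * (p * a * p + (1 - p) * b * (1 - p)) * p
      = (p * p) * a * (p * p) + (p * (1 - p)) * b * ((1 - p) * p) := by noncomm_ring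
    _ = p * a * p := by rw [hp.eq, h₁, h₂, zero_mul, zero_mul, add_zero]

theorem IsIdempotentElem.one_sub_mul_add_mul_mul_eq {R : Type*} [Ring R] {p : R}
    (hp : IsIdempotentElem p) (a b : R) :
    (1 - p) * (p * a * p + (1 - p) * b * (1 - p)) * (1 - p) = (1 - p) * b * (1 - p) := by
  simpa [add_comm] using hp.one_sub.mul_add_mul_mul_eq b a

theorem sub_mul_add_mul_sub_eq {R : Type*} [Ring R] {p q a b : R}
    (hqa : q * a = 0) (haq : a * q = 0) (hqb : q * b = b) (hbq : b * q = b) :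
    (q - p) * (a + b) * (q - p) = p * a * p + (1 - p) * b * (1 - p) := by
  have hqa' : ∀ x, q * (a * x) = 0 := fun x => by rw [← mul_assoc, hqa, zero_mul]
  simp only [mul_sub, sub_mul, mul_add, add_mul, mul_one, one_mul, mul_assoc, hqa', hqb, haq, hbq,
    mul_zero]
  abel

theorem sub_mul_mul_star_sub_mul_eq {R : Type*} [Ring R] [StarRing R] {p q s a b : R}
    (hp : IsSelfAdjoint p) (hq : IsSelfAdjoint q) (hs : IsSelfAdjoint s) (ha : IsSelfAdjoint a)
    (hb : IsSelfAdjoint b) (hs2 : s * s = a + b) (hqa : q * a = 0) (hqb : q * b = b) :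
    (q - p) * s * star ((q - p) * s) = p * a * p + (1 - p) * b * (1 - p) := by
  have haq : a * q = 0 := by simpa [ha.star_eq, hq.star_eq] using congrArg star hqa
  have hbq : b * q = b := by simpa [hb.star_eq, hq.star_eq] using congrArg star hqb
  rw [star_mul, star_sub, hp.star_eq, hq.star_eq, hs.star_eq,
    show (q - p) * s * (s * (q - p)) = (q - p) * (s * s) * (q - p) by noncomm_ring, hs2]
  exact sub_mul_add_mul_sub_eq hqa haq hqb hbq

section HilbertSchmidt

variable {H : Type*} [NormedAddCommGroup H] [InnerProductSpace ℂ H]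
  {ι : Type*} (e : HilbertBasis ι ℂ H)

theorem HilbertBasis.hasSum_norm_inner_sq_s2 (x : H) :
    HasSum (fun j => ‖⟪x, e j⟫_ℂ‖ ^ 2) (‖x‖ ^ 2) := by
  convert (e.hasSum_inner_mul_inner x x).mapL Complex.reCLM using 2 with j
  · rw [← inner_conj_symm x (e j), Complex.conj_mul']
    simp [← Complex.ofReal_pow, norm_inner_symm]
  · simp [← inner_self_eq_norm_sq (𝕜 := ℂ)]

theorem HilbertBasis.summable_norm_apply_sq_iff_prod (X : H →L[ℂ] H) :
    Summable (fun i => ‖X (e i)‖ ^ 2) ↔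
      Summable (fun p : ι × ι => ‖⟪X (e p.1), e p.2⟫_ℂ‖ ^ 2) := by
  simp only [summable_prod_of_nonneg (fun _ => sq_nonneg _),
    fun i => (e.hasSum_norm_inner_sq_s2 (X (e i))).tsum_eq,
    fun i => (e.hasSum_norm_inner_sq_s2 (X (e i))).summable, implies_true, true_and]

theorem HilbertBasis.tsum_norm_apply_sq_eq_prod (X : H →L[ℂ] H)
    (hX : Summable fun i => ‖X (e i)‖ ^ 2) :
    ∑' i, ‖X (e i)‖ ^ 2 = ∑' p : ι × ι, ‖⟪X (e p.1), e p.2⟫_ℂ‖ ^ 2 := by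
  rw [((e.summable_norm_apply_sq_iff_prod X).1 hX).tsum_prod'
    (fun i => (e.hasSum_norm_inner_sq_s2 (X (e i))).summable)]
  exact tsum_congr fun i => (e.hasSum_norm_inner_sq_s2 (X (e i))).tsum_eq.symm

theorem HilbertBasis.summable_norm_mul_apply_sq (Y : H →L[ℂ] H) {X : H →L[ℂ] H}
    (hX : Summable fun i => ‖X (e i)‖ ^ 2) : Summable fun i => ‖(Y * X) (e i)‖ ^ 2 := by
  refine .of_nonneg_of_le (fun _ => sq_nonneg _) (fun i => ?_) (hX.mul_left (‖Y‖ ^ 2))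
  rw [← mul_pow]
  exact pow_le_pow_left₀ (norm_nonneg _) (Y.le_opNorm _) 2

variable [CompleteSpace H]

theorem ContinuousLinearMap.norm_inner_star_apply_left (X : H →L[ℂ] H) (x y : H) :
    ‖⟪star X y, x⟫_ℂ‖ = ‖⟪X x, y⟫_ℂ‖ := by
  rw [star_eq_adjoint, adjoint_inner_left, norm_inner_symm]

theorem HilbertBasis.summable_norm_star_apply_sq_iff (X : H →L[ℂ] H) :
    Summable (fun i => ‖star X (e i)‖ ^ 2) ↔ Summable (fun i => ‖X (e i)‖ ^ 2) := by
  rw [e.summable_norm_apply_sq_iff_prod, e.summable_norm_apply_sq_iff_prod,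
    ← (Equiv.prodComm ι ι).summable_iff]
  simp only [Function.comp_def, Equiv.prodComm_apply, Prod.fst_swap, Prod.snd_swap,
    norm_inner_star_apply_left]

theorem HilbertBasis.tsum_norm_star_apply_sq (X : H →L[ℂ] H) :
    ∑' i, ‖star X (e i)‖ ^ 2 = ∑' i, ‖X (e i)‖ ^ 2 := by
  by_cases hX : Summable fun i => ‖X (e i)‖ ^ 2
  · rw [e.tsum_norm_apply_sq_eq_prod X hX,
      e.tsum_norm_apply_sq_eq_prod _ ((e.summable_norm_star_apply_sq_iff X).2 hX),
      ← (Equiv.prodComm ι ι).tsum_eq]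
    simp only [Equiv.prodComm_apply, Prod.fst_swap, Prod.snd_swap, norm_inner_star_apply_left]
  · rw [tsum_eq_zero_of_not_summable hX,
      tsum_eq_zero_of_not_summable (mt (e.summable_norm_star_apply_sq_iff X).1 hX)]

theorem ContinuousLinearMap.re_inner_mul_star_apply_self (X : H →L[ℂ] H) (v : H) :
    (⟪(X * star X) v, v⟫_ℂ).re = ‖star X v‖ ^ 2 := by
  rw [mul_apply_eq_comp, star_eq_adjoint, ← adjoint_inner_right]
  simpa using inner_self_eq_norm_sq (𝕜 := ℂ) (adjoint X v)

theorem HilbertBasis.summable_re_inner_mul_star_iff (X : H →L[ℂ] H) :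
    Summable (fun i => (⟪(X * star X) (e i), e i⟫_ℂ).re) ↔ Summable fun i => ‖X (e i)‖ ^ 2 := by
  simp only [re_inner_mul_star_apply_self, e.summable_norm_star_apply_sq_iff]

theorem HilbertBasis.tsum_re_inner_mul_star (X : H →L[ℂ] H) :
    ∑' i, (⟪(X * star X) (e i), e i⟫_ℂ).re = ∑' i, ‖X (e i)‖ ^ 2 := by
  simp only [re_inner_mul_star_apply_self, e.tsum_norm_star_apply_sq]

theorem ContinuousLinearMap.isPositive_mul_star (X : H →L[ℂ] H) : (X * star X).IsPositive :=
  isPositive_self_comp_adjoint X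

end HilbertSchmidt

namespace IsTraceClassDiag

variable {H : Type*} [NormedAddCommGroup H] [InnerProductSpace ℂ H] [CompleteSpace H]
  {ι : Type*} {e : HilbertBasis ι ℂ H} {T U : H →L[ℂ] H}

theorem summable_re_inner (hT : IsTraceClassDiag e T) :
    Summable fun i => (⟪T (e i), e i⟫_ℂ).re := by
  obtain ⟨T₁, T₂, -, -, rfl, h₁, h₂⟩ := hT
  simpa only [sub_apply, inner_sub_left, Complex.sub_re] using h₁.sub h₂

theorem of_isPositive (hT : T.IsPositive) (h : Summable fun i => (⟪T (e i), e i⟫_ℂ).re) :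
    IsTraceClassDiag e T :=
  ⟨T, 0, hT, isPositive_zero, (sub_zero T).symm, h, by simp⟩

theorem sub (hT : IsTraceClassDiag e T) (hU : IsTraceClassDiag e U) :
    IsTraceClassDiag e (T - U) := by
  obtain ⟨T₁, T₂, hT₁, hT₂, rfl, sT₁, sT₂⟩ := hT
  obtain ⟨U₁, U₂, hU₁, hU₂, rfl, sU₁, sU₂⟩ := hU
  refine ⟨T₁ + U₂, T₂ + U₁, hT₁.add hU₂, hT₂.add hU₁, by abel, ?_, ?_⟩ <;>
    simpa only [add_apply, inner_add_left, Complex.add_re] using .add ‹_› ‹_›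

end IsTraceClassDiag

theorem HilbertBasis.isTraceClassDiag_mul_star {H : Type*} [NormedAddCommGroup H]
    [InnerProductSpace ℂ H] [CompleteSpace H] {ι : Type*} (e : HilbertBasis ι ℂ H)
    {X : H →L[ℂ] H} (hX : Summable fun i => ‖X (e i)‖ ^ 2) : IsTraceClassDiag e (X * star X) :=
  .of_isPositive (isPositive_mul_star X) ((e.summable_re_inner_mul_star_iff X).2 hX)

theorem stmt2_general {H : Type*} [NormedAddCommGroup H] [InnerProductSpace ℂ H] [CompleteSpace H]
    {ι : Type*} (e : HilbertBasis ι ℂ H)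
    (A B P Q Ap Am Bp Bm S : H →L[ℂ] H)
    (hAdec : A = Ap - Am)
    (hBp : Bp.IsPositive) (hBm : Bm.IsPositive) (hBdec : B = Bp - Bm)
    (hP : IsSelfAdjoint P) (hP2 : P * P = P) (hPAp : P * Ap = 0) (hPAm : P * Am = Am)
    (hQ : IsSelfAdjoint Q) (hQBp : Q * Bp = 0) (hQBm : Q * Bm = Bm)
    (hS : S.IsPositive) (hS2 : S * S = Bp + Bm)
    (hV : IsTraceClassDiag e (P * (B - A) * P)) :
    ((IsTraceClassDiag e (P * (Bm - Am) * P) ∧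
        IsTraceClassDiag e ((1 - P) * (Bm - Am) * (1 - P))) ↔
      Summable (fun i => ‖((Q - P) * S) (e i)‖ ^ 2)) ∧
    ((IsTraceClassDiag e (P * (Bm - Am) * P) ∧
        IsTraceClassDiag e ((1 - P) * (Bm - Am) * (1 - P))) →
      (Summable fun i => (inner ℂ ((P * (Bm - Am) * P) (e i)) (e i) : ℂ).re) ∧
      (Summable fun i => (inner ℂ (((1 - P) * (Bm - Am) * (1 - P)) (e i)) (e i) : ℂ).re) ∧
      (Summable fun i => (inner ℂ ((P * (B - A) * P) (e i)) (e i) : ℂ).re) ∧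
      (∑' i, (inner ℂ ((P * (Bm - Am) * P) (e i)) (e i) : ℂ).re) +
          (∑' i, (inner ℂ (((1 - P) * (Bm - Am) * (1 - P)) (e i)) (e i) : ℂ).re) +
          (∑' i, (inner ℂ ((P * (B - A) * P) (e i)) (e i) : ℂ).re) =
        ∑' i, ‖((Q - P) * S) (e i)‖ ^ 2) := by
  set X := (Q - P) * S
  have hXX : X * star X = P * Bp * P + (1 - P) * Bm * (1 - P) :=
    sub_mul_mul_star_sub_mul_eq hP hQ hS.isSelfAdjoint hBp.isSelfAdjoint hBm.isSelfAdjoint hS2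
      hQBp hQBm
  have hPX : P * X * star (P * X) = P * Bp * P := by
    rw [star_mul, hP.star_eq, show P * X * (star X * P) = P * (X * star X) * P by noncomm_ring,
      hXX, IsIdempotentElem.mul_add_mul_mul_eq hP2]
  have hP'X : (1 - P) * X * star ((1 - P) * X) = (1 - P) * Bm * (1 - P) := by
    rw [star_mul, star_sub, star_one, hP.star_eq, show (1 - P) * X * (star X * (1 - P)) =
      (1 - P) * (X * star X) * (1 - P) by noncomm_ring, hXX,
      IsIdempotentElem.one_sub_mul_add_mul_mul_eq hP2]
  have hT₁ : P * (Bm - Am) * P = P * X * star (P * X) - P * (B - A) * P := by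
    rw [hPX, hAdec, hBdec]
    simp only [mul_sub, sub_mul, hPAp, zero_mul]
    abel
  have hT₂ : (1 - P) * (Bm - Am) * (1 - P) = (1 - P) * X * star ((1 - P) * X) := by
    rw [hP'X, mul_sub (1 - P), sub_mul 1 P Am, one_mul, hPAm, sub_self, sub_zero]
  have hsum : P * (Bm - Am) * P + (1 - P) * (Bm - Am) * (1 - P) + P * (B - A) * P =
      X * star X := by
    rw [hT₁, hT₂, hP'X, hPX, hXX]
    abel
  have hdiag : ∀ i, (⟪(P * (Bm - Am) * P) (e i), e i⟫_ℂ).re +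
      (⟪((1 - P) * (Bm - Am) * (1 - P)) (e i), e i⟫_ℂ).re + (⟪(P * (B - A) * P) (e i), e i⟫_ℂ).re =
      (⟪(X * star X) (e i), e i⟫_ℂ).re := fun i => by
    simp only [← hsum, add_apply, inner_add_left, Complex.add_re]
  have hV₀ := hV.summable_re_inner
  refine ⟨⟨fun ⟨h₁, h₂⟩ => ?_, fun hX => ⟨?_, ?_⟩⟩, fun ⟨h₁, h₂⟩ => ?_⟩
  · exact (e.summable_re_inner_mul_star_iff X).1
      (((h₁.summable_re_inner.add h₂.summable_re_inner).add hV₀).congr hdiag)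
  · rw [hT₁]
    exact (e.isTraceClassDiag_mul_star (e.summable_norm_mul_apply_sq P hX)).sub hV
  · rw [hT₂]
    exact e.isTraceClassDiag_mul_star (e.summable_norm_mul_apply_sq (1 - P) hX)
  · have s₁ := h₁.summable_re_inner
    have s₂ := h₂.summable_re_inner
    refine ⟨s₁, s₂, hV₀, ?_⟩
    rw [← s₁.tsum_add s₂, ← (s₁.add s₂).tsum_add hV₀, tsum_congr hdiag,
      e.tsum_re_inner_mul_star]

/-- Lemma on traces: with `P = 1_{A<0}`, `Q = 1_{B<0}`, if `P(B-A)P ∈ S₁` then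
`P(B_- - A_-)P, (1-P)(B_- - A_-)(1-P) ∈ S₁` iff `(Q-P)|B|^{1/2} ∈ S₂`, and in that case
`tr P(B_- - A_-)P + tr (1-P)(B_- - A_-)(1-P) + tr P(B-A)P = ‖(Q-P)|B|^{1/2}‖_{S₂}²`. -/
theorem stmt2 {H : Type*} [NormedAddCommGroup H] [InnerProductSpace ℂ H] [CompleteSpace H]
    {ι : Type*} (e : HilbertBasis ι ℂ H)
    (A B P Q Ap Am Bp Bm S : H →L[ℂ] H)
    (hA : IsSelfAdjoint A) (hB : IsSelfAdjoint B)
    (hAp : Ap.IsPositive) (hAm : Am.IsPositive) (hAdec : A = Ap - Am) (hAorth : Ap * Am = 0)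
    (hBp : Bp.IsPositive) (hBm : Bm.IsPositive) (hBdec : B = Bp - Bm) (hBorth : Bp * Bm = 0)
    (hP : IsSelfAdjoint P) (hP2 : P * P = P) (hPAp : P * Ap = 0) (hPAm : P * Am = Am)
    (hQ : IsSelfAdjoint Q) (hQ2 : Q * Q = Q) (hQBp : Q * Bp = 0) (hQBm : Q * Bm = Bm)
    (hS : S.IsPositive) (hS2 : S * S = Bp + Bm)
    (hV : IsTraceClassDiag e (P * (B - A) * P)) :
    ((IsTraceClassDiag e (P * (Bm - Am) * P) ∧
        IsTraceClassDiag e ((1 - P) * (Bm - Am) * (1 - P))) ↔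
      Summable (fun i => ‖((Q - P) * S) (e i)‖ ^ 2)) ∧
    ((IsTraceClassDiag e (P * (Bm - Am) * P) ∧
        IsTraceClassDiag e ((1 - P) * (Bm - Am) * (1 - P))) →
      (Summable fun i => (inner ℂ ((P * (Bm - Am) * P) (e i)) (e i) : ℂ).re) ∧
      (Summable fun i => (inner ℂ (((1 - P) * (Bm - Am) * (1 - P)) (e i)) (e i) : ℂ).re) ∧
      (Summable fun i => (inner ℂ ((P * (B - A) * P) (e i)) (e i) : ℂ).re) ∧
      (∑' i, (inner ℂ ((P * (Bm - Am) * P) (e i)) (e i) : ℂ).re) +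
          (∑' i, (inner ℂ (((1 - P) * (Bm - Am) * (1 - P)) (e i)) (e i) : ℂ).re) +
          (∑' i, (inner ℂ ((P * (B - A) * P) (e i)) (e i) : ℂ).re) =
        ∑' i, ‖((Q - P) * S) (e i)‖ ^ 2) :=
  stmt2_general e A B P Q Ap Am Bp Bm S hAdec hBp hBm hBdec hP hP2 hPAp hPAm hQ hQBp hQBm hS hS2 hV
end

section
/- For every real γ > 1, every μ ∈ ℝ, and every real v, one has ∫_0^∞ ((v-μ+τ)_-^{1+d/2} - (μ-τ)_+^{1+d/2} + (1+d/2)(μ-τ)_+^{d/2} v) τ^{γ-2} dτ = (Γ(d/2+2) Γ(γ-1)/Γ(γ+d/2+1)) ((v-μ)_-^{γ+d/2} - μ_+^{γ+d/2} + (γ+d/2) μ_+^{γ+d/2-1} v), where d ≥ 1 is an integer. -/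
/-!
Substituting `τ = c x` turns `∫₀^∞ (c - τ)₊^p τ^(γ-2) dτ` into `c₊^(γ+p-1)` times the Beta integral
`B(γ - 1, p + 1)`. The left-hand side of the identity is a linear combination of three integrals of
this kind (with `c = μ - v, μ, μ` and `p = 1 + d/2, 1 + d/2, d/2`), and `Γ(x + 1) = x Γ(x)` matches
the three resulting constants.
-/

open MeasureTheory Set

lemma Real.intervalIntegral_rpow_mul_one_sub_rpow {s t : ℝ} (hs : 0 < s) (ht : 0 < t) :
    ∫ x in (0 : ℝ)..1, x ^ (s - 1) * (1 - x) ^ (t - 1) =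
      Real.Gamma s * Real.Gamma t / Real.Gamma (s + t) := by
  have hβ : Complex.betaIntegral s t =
      ((∫ x in (0 : ℝ)..1, x ^ (s - 1) * (1 - x) ^ (t - 1) : ℝ) : ℂ) := by
    rw [Complex.betaIntegral, ← intervalIntegral.integral_ofReal]
    refine intervalIntegral.integral_congr fun x hx => ?_
    rw [uIcc_of_le zero_le_one] at hx
    push_cast
    rw [Complex.ofReal_cpow hx.1, Complex.ofReal_cpow (sub_nonneg.mpr hx.2)]
    push_cast
    ring
  have h := Complex.betaIntegral_eq_Gamma_mul_div s t (by simpa using hs) (by simpa using ht)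
  rw [hβ, ← Complex.ofReal_add, Complex.Gamma_ofReal, Complex.Gamma_ofReal,
    Complex.Gamma_ofReal] at h
  exact_mod_cast h

lemma Real.intervalIntegral_rpow_mul_sub_rpow {c s t : ℝ} (hc : 0 < c) (hs : 0 < s) (ht : 0 < t) :
    ∫ τ in (0 : ℝ)..c, τ ^ (s - 1) * (c - τ) ^ (t - 1) =
      c ^ (s + t - 1) * (Real.Gamma s * Real.Gamma t / Real.Gamma (s + t)) := by
  have hscale := intervalIntegral.smul_integral_comp_mul_left
    (fun τ => τ ^ (s - 1) * (c - τ) ^ (t - 1)) c (a := 0) (b := 1)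
  rw [mul_zero, mul_one] at hscale
  rw [← hscale, ← Real.intervalIntegral_rpow_mul_one_sub_rpow hs ht, smul_eq_mul,
    ← intervalIntegral.integral_const_mul, ← intervalIntegral.integral_const_mul]
  refine intervalIntegral.integral_congr fun x hx => ?_
  rw [uIcc_of_le zero_le_one] at hx
  have hx' : 0 ≤ 1 - x := sub_nonneg.mpr hx.2
  rw [show c - c * x = c * (1 - x) by ring, Real.mul_rpow hc.le hx.1, Real.mul_rpow hc.le hx',
    show s + t - 1 = 1 + (s - 1) + (t - 1) by ring, Real.rpow_add hc, Real.rpow_add hc,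
    Real.rpow_one]
  ring

section TruncatedPower

variable {c p τ : ℝ}

lemma max_sub_zero_rpow_of_le (hp : 0 < p) (h : c ≤ τ) : max (c - τ) 0 ^ p = 0 := by
  rw [max_eq_right (sub_nonpos.mpr h), Real.zero_rpow hp.ne']

lemma continuous_max_sub_zero_rpow (c : ℝ) (hp : 0 < p) :
    Continuous fun τ : ℝ => max (c - τ) 0 ^ p :=
  ((continuous_const.sub continuous_id).max continuous_const).rpow_const
    fun _ => Or.inr hp.le

variable {γ : ℝ}

lemma integrableOn_max_sub_zero_rpow_mul_rpow (c : ℝ) (hp : 0 < p) (hγ : 1 < γ) :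
    IntegrableOn (fun τ => max (c - τ) 0 ^ p * τ ^ (γ - 2)) (Ioi 0) := by
  have hb : (0 : ℝ) ≤ max c 0 := le_max_right c 0
  have hIoc : IntegrableOn (fun τ => max (c - τ) 0 ^ p * τ ^ (γ - 2)) (Ioc 0 (max c 0)) :=
    (intervalIntegrable_iff_integrableOn_Ioc_of_le hb).mp
      ((intervalIntegral.intervalIntegrable_rpow' (by linarith)).continuousOn_mul
        (continuous_max_sub_zero_rpow c hp).continuousOn)
  refine hIoc.of_forall_sdiff_eq_zero measurableSet_Ioi fun τ hτ => ?_
  have hcτ : c ≤ τ := (le_max_left c 0).trans (not_le.mp fun h => hτ.2 ⟨hτ.1, h⟩).le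
  rw [max_sub_zero_rpow_of_le hp hcτ, zero_mul]

lemma integral_max_sub_zero_rpow_mul_rpow (c : ℝ) (hp : 0 < p) (hγ : 1 < γ) :
    ∫ τ in Ioi 0, max (c - τ) 0 ^ p * τ ^ (γ - 2) =
      Real.Gamma (p + 1) * Real.Gamma (γ - 1) / Real.Gamma (γ + p) * max c 0 ^ (γ + p - 1) := by
  rcases le_or_gt c 0 with hc | hc
  · rw [max_eq_right hc, Real.zero_rpow (by linarith), mul_zero]
    exact setIntegral_eq_zero_of_forall_eq_zero fun τ hτ => by
      rw [max_sub_zero_rpow_of_le hp (hc.trans (le_of_lt hτ)), zero_mul]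
  have hIoc : ∫ τ in Ioi 0, max (c - τ) 0 ^ p * τ ^ (γ - 2) =
      ∫ τ in Ioc 0 c, max (c - τ) 0 ^ p * τ ^ (γ - 2) :=
    setIntegral_eq_of_subset_of_forall_sdiff_eq_zero measurableSet_Ioi Ioc_subset_Ioi_self
      fun τ hτ => by
        rw [max_sub_zero_rpow_of_le hp (not_le.mp fun h => hτ.2 ⟨hτ.1, h⟩).le, zero_mul]
  have hβ := Real.intervalIntegral_rpow_mul_sub_rpow hc (by linarith : 0 < γ - 1)
    (by linarith : 0 < p + 1)
  rw [intervalIntegral.integral_of_le hc.le] at hβ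
  calc ∫ τ in Ioi 0, max (c - τ) 0 ^ p * τ ^ (γ - 2)
      = ∫ τ in Ioc 0 c, τ ^ (γ - 1 - 1) * (c - τ) ^ (p + 1 - 1) := by
        rw [hIoc]
        refine setIntegral_congr_fun measurableSet_Ioc fun τ hτ => ?_
        rw [max_eq_left (sub_nonneg.mpr hτ.2), show γ - 1 - 1 = γ - 2 by ring,
          add_sub_cancel_right, mul_comm]
    _ = _ := by
        rw [hβ, max_eq_left hc.le, show γ - 1 + (p + 1) = γ + p by ring]
        ring

end TruncatedPower

/-- Beta-function identity used in the Aizenman--Lieb argument. -/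
theorem stmt4 (d : ℕ) (hd : 1 ≤ d) (γ μ v : ℝ) (hγ : 1 < γ) :
    (∫ τ in Set.Ioi (0 : ℝ),
        ((max (-(v - μ + τ)) 0) ^ (1 + (d : ℝ) / 2) - (max (μ - τ) 0) ^ (1 + (d : ℝ) / 2) +
            (1 + (d : ℝ) / 2) * (max (μ - τ) 0) ^ ((d : ℝ) / 2) * v) * τ ^ (γ - 2)) =
      Real.Gamma ((d : ℝ) / 2 + 2) * Real.Gamma (γ - 1) / Real.Gamma (γ + (d : ℝ) / 2 + 1) *
        ((max (-(v - μ)) 0) ^ (γ + (d : ℝ) / 2) - (max μ 0) ^ (γ + (d : ℝ) / 2) +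
          (γ + (d : ℝ) / 2) * (max μ 0) ^ (γ + (d : ℝ) / 2 - 1) * v) := by
  have hq : (0 : ℝ) < d / 2 := by
    have : (1 : ℝ) ≤ d := by exact_mod_cast hd
    linarith
  have hp : (0 : ℝ) < 1 + d / 2 := by linarith
  have i₁ := integrableOn_max_sub_zero_rpow_mul_rpow (μ - v) hp hγ
  have i₂ := integrableOn_max_sub_zero_rpow_mul_rpow μ hp hγ
  have i₃ := integrableOn_max_sub_zero_rpow_mul_rpow μ hq hγ
  have hsplit : ∀ τ, ((max (-(v - μ + τ)) 0) ^ (1 + (d : ℝ) / 2) -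
        (max (μ - τ) 0) ^ (1 + (d : ℝ) / 2) +
        (1 + (d : ℝ) / 2) * (max (μ - τ) 0) ^ ((d : ℝ) / 2) * v) * τ ^ (γ - 2) =
      max (μ - v - τ) 0 ^ (1 + (d : ℝ) / 2) * τ ^ (γ - 2) -
        max (μ - τ) 0 ^ (1 + (d : ℝ) / 2) * τ ^ (γ - 2) +
        (1 + (d : ℝ) / 2) * v * (max (μ - τ) 0 ^ ((d : ℝ) / 2) * τ ^ (γ - 2)) := fun τ => by
    rw [show -(v - μ + τ) = μ - v - τ by ring]; ring
  simp_rw [hsplit]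
  have i₁₂ : IntegrableOn (fun τ => max (μ - v - τ) 0 ^ (1 + (d : ℝ) / 2) * τ ^ (γ - 2) -
      max (μ - τ) 0 ^ (1 + (d : ℝ) / 2) * τ ^ (γ - 2)) (Ioi 0) := i₁.sub i₂
  rw [integral_add i₁₂ (i₃.const_mul _), integral_sub i₁ i₂, integral_const_mul,
    integral_max_sub_zero_rpow_mul_rpow _ hp hγ, integral_max_sub_zero_rpow_mul_rpow _ hp hγ,
    integral_max_sub_zero_rpow_mul_rpow _ hq hγ, show -(v - μ) = μ - v by ring,
    show 1 + (d : ℝ) / 2 + 1 = d / 2 + 1 + 1 by ring, show (d : ℝ) / 2 + 2 = d / 2 + 1 + 1 by ring,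
    show γ + (1 + (d : ℝ) / 2) = γ + d / 2 + 1 by ring,
    show γ + (d : ℝ) / 2 + 1 - 1 = γ + d / 2 by ring, Real.Gamma_add_one (by positivity),
    Real.Gamma_add_one (by linarith : γ + (d : ℝ) / 2 ≠ 0)]
  have : Real.Gamma (γ + (d : ℝ) / 2) ≠ 0 := (Real.Gamma_pos_of_pos (by linarith)).ne'
  field_simp
  ring
end
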